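/- arXiv:2508.14651 — 4 statements merged into one kernel-verified Lean document; each statement's English description precedes it below -/
import Mathlib

section
/- Let I be an ideal of C(X). The space C(X) equipped with the m^I-topology is first countable if and only if X is I-pseudocompact. -/
open Set Topology TopologicalSpace Pointwise

/-- `⋂ Z[I] = ⋂_{g ∈ I} Z(g)`, the intersection of the zero sets of members of `I`. -/
def zInter {X : Type*} [TopologicalSpace X] (I : Ideal C(X, ℝ)) : Set X :=
  {x | ∀ g ∈ I, g x = 0}

/-- `B_u(f, I, ε) = {g ∈ C(X) : sup_{x ∈ X} |f x - g x| < ε and f - g ∈ I}`. -/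
def uBall {X : Type*} [TopologicalSpace X] (I : Ideal C(X, ℝ)) (f : C(X, ℝ)) (ε : ℝ) :
    Set C(X, ℝ) :=
  {g | (∃ M, M < ε ∧ ∀ x, |f x - g x| ≤ M) ∧ f - g ∈ I}

/-- The `u^I`-topology on `C(X)`, with open base `{B_u(f, I, ε) : f ∈ C(X), ε > 0}`. -/
def uTopology {X : Type*} [TopologicalSpace X] (I : Ideal C(X, ℝ)) :
    TopologicalSpace C(X, ℝ) :=
  TopologicalSpace.generateFrom {B | ∃ f ε, 0 < ε ∧ B = uBall I f ε}

/-- `B_m(f, I, u) = {g ∈ C(X) : |f x - g x| < u x for all x ∈ X and f - g ∈ I}`. -/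
def mBall {X : Type*} [TopologicalSpace X] (I : Ideal C(X, ℝ)) (f u : C(X, ℝ)) :
    Set C(X, ℝ) :=
  {g | (∀ x, |f x - g x| < u x) ∧ f - g ∈ I}

/-- The `m^I`-topology on `C(X)`, with open base
`{B_m(f, I, u) : f ∈ C(X), u ∈ C₊(X)}`. -/
def mTopology {X : Type*} [TopologicalSpace X] (I : Ideal C(X, ℝ)) :
    TopologicalSpace C(X, ℝ) :=
  TopologicalSpace.generateFrom {B | ∃ f u, (∀ x, 0 < u x) ∧ B = mBall I f u}

/-- A subset `Y` of `X` is bounded if every `f ∈ C(X)` is bounded on `Y`. -/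
def BoundedOn {X : Type*} [TopologicalSpace X] (Y : Set X) : Prop :=
  ∀ f : C(X, ℝ), ∃ M : ℝ, ∀ x ∈ Y, |f x| ≤ M

/-- `X` is `I`-pseudocompact if `X ∖ ⋂ Z[I]` is a bounded subset of `X`. -/
def IPseudocompact {X : Type*} [TopologicalSpace X] (I : Ideal C(X, ℝ)) : Prop :=
  BoundedOn (zInter I)ᶜ

/-- A subset `S` of `X` is pseudocompact (as a subspace) if every continuous
real-valued function on the subspace `S` is bounded. -/
def PseudocompactOn {X : Type*} [TopologicalSpace X] (S : Set X) : Prop :=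
  ∀ g : C(S, ℝ), ∃ M : ℝ, ∀ y : S, |g y| ≤ M

/-!
The `m^I`-balls `B_m(f, I, u)` form a basis of the `m^I`-topology. Off `⋂ Z[I]` a ball around `f`
really constrains `g` to `|f - g| < u` (an element of `I` not vanishing at `x` lets `g` come within
a factor 2 of `u x`), whereas on `⋂ Z[I]` it forces `g = f`. Hence only the values of `u` off
`⋂ Z[I]` matter. If `X ∖ ⋂ Z[I]` is bounded, every positive `u` is bounded below there by some
`1/(n+1)`, and the constant radii give a countable basis. If some `f` is unbounded there, pick
`x_n` off `⋂ Z[I]` with `|f x_n| > n`; for any countable family of radii `u_n` a diagonal radius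
`G ∘ |f|` with `G(|f x_n|) ≤ u_n(x_n)/2` gives a ball containing none of the `B_m(0, I, u_n)`.
-/

open Filter

theorem Real.exists_continuous_pos_le_of_tendsto_atTop {t c : ℕ → ℝ}
    (ht : Tendsto t atTop atTop) (hc : ∀ n, 0 < c n) :
    ∃ G : C(ℝ, ℝ), (∀ r, 0 < G r) ∧ ∀ n, G (t n) ≤ c n := by
  have hbdd (r : ℝ) : BddBelow (range fun n => c n + dist r (t n)) :=
    ⟨0, by rintro _ ⟨n, rfl⟩; exact add_nonneg (hc n).le dist_nonneg⟩
  let G (r : ℝ) : ℝ := ⨅ n, (c n + dist r (t n))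
  have hG_le (r : ℝ) (n : ℕ) : G r ≤ c n + dist r (t n) := ciInf_le (hbdd r) n
  have hG_lip : LipschitzWith 1 G := LipschitzWith.of_le_add fun r q =>
    sub_le_iff_le_add.1 <| le_ciInf fun n => sub_le_iff_le_add.2 <|
      calc G r ≤ c n + dist r (t n) := hG_le r n
        _ ≤ c n + dist q (t n) + dist r q := by linarith [dist_triangle r q (t n)]
  refine ⟨⟨G, hG_lip.continuous⟩, fun r => ?_, fun n => by simpa using hG_le (t n) n⟩
  -- only the finitely many `t n` with `n < N` can lie below `r + 1`
  obtain ⟨N, hN⟩ := eventually_atTop.1 (ht.eventually_ge_atTop (r + 1))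
  let δ := min 1 ((Finset.range (N + 1)).inf' Finset.nonempty_range_add_one c)
  have hδ : 0 < δ := lt_min one_pos ((Finset.lt_inf'_iff _).2 fun n _ => hc n)
  have hδ₁ : δ ≤ 1 := min_le_left _ _
  refine hδ.trans_le (le_ciInf fun n => ?_)
  rcases le_or_gt n N with hn | hn
  · have : δ ≤ c n :=
      (min_le_right _ _).trans (Finset.inf'_le c (Finset.mem_range.2 (Nat.lt_succ_of_le hn)))
    linarith [dist_nonneg (x := r) (y := t n)]
  · have : 1 ≤ dist r (t n) := by
      rw [Real.dist_eq, abs_sub_comm]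
      linarith [hN n hn.le, le_abs_self (t n - r)]
    linarith [hc n]

section mBall

variable {X : Type*} [TopologicalSpace X] {I : Ideal C(X, ℝ)} {f g u v : C(X, ℝ)}

theorem mem_mBall_self (hu : ∀ x, 0 < u x) : f ∈ mBall I f u :=
  ⟨fun x => by simpa using hu x, by simp⟩

theorem mBall_inf : mBall I f (u ⊓ v) = mBall I f u ∩ mBall I f v := by
  ext g
  simp only [mBall, mem_ofPred_eq, mem_inter_iff, ContinuousMap.inf_apply, lt_inf_iff, forall_and]
  tauto

theorem exists_mBall_subset_mBall_of_mem (hg : g ∈ mBall I f u) :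
    ∃ v : C(X, ℝ), (∀ x, 0 < v x) ∧ mBall I g v ⊆ mBall I f u := by
  refine ⟨u - |f - g|, fun x => by simpa using hg.1 x, fun h hh => ⟨fun x => ?_, ?_⟩⟩
  · have := hh.1 x
    simp only [ContinuousMap.sub_apply, ContinuousMap.abs_apply] at this
    linarith [abs_sub_le (f x) (g x) (h x)]
  · simpa using I.add_mem hg.2 hh.2

theorem isTopologicalBasis_mBall :
    @IsTopologicalBasis C(X, ℝ) (mTopology I)
      {B | ∃ f u, (∀ x, 0 < u x) ∧ B = mBall I f u} := by
  let := mTopology I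
  refine ⟨?_, sUnion_eq_univ_iff.2 fun f =>
    ⟨_, ⟨f, 1, fun _ => one_pos, rfl⟩, mem_mBall_self fun _ => one_pos⟩, rfl⟩
  rintro _ ⟨f₁, u₁, -, rfl⟩ _ ⟨f₂, u₂, -, rfl⟩ g ⟨hg₁, hg₂⟩
  obtain ⟨v₁, hv₁, h₁⟩ := exists_mBall_subset_mBall_of_mem hg₁
  obtain ⟨v₂, hv₂, h₂⟩ := exists_mBall_subset_mBall_of_mem hg₂
  have hv (x : X) : 0 < (v₁ ⊓ v₂) x := lt_min (hv₁ x) (hv₂ x)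
  refine ⟨_, ⟨g, _, hv, rfl⟩, mem_mBall_self hv, ?_⟩
  rw [mBall_inf]
  exact inter_subset_inter h₁ h₂

theorem hasBasis_nhds_mBall (f : C(X, ℝ)) :
    (@nhds _ (mTopology I) f).HasBasis (fun u : C(X, ℝ) => ∀ x, 0 < u x) (mBall I f) := by
  let := mTopology I
  refine isTopologicalBasis_mBall.nhds_hasBasis.to_hasBasis ?_
    fun u hu => ⟨_, ⟨⟨f, u, hu, rfl⟩, mem_mBall_self hu⟩, subset_rfl⟩
  rintro _ ⟨⟨g, u, -, rfl⟩, hf⟩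
  exact exists_mBall_subset_mBall_of_mem hf

theorem mBall_subset_mBall_of_forall_notMem_le (hu : ∀ x, 0 < u x)
    (hvu : ∀ x ∉ zInter I, v x ≤ u x) : mBall I f v ⊆ mBall I f u := by
  refine fun g hg => ⟨fun x => ?_, hg.2⟩
  by_cases hx : x ∈ zInter I
  · have : f x - g x = 0 := by simpa using hx _ hg.2
    simpa [this] using hu x
  · exact (hg.1 x).trans_le (hvu x hx)

theorem exists_mem_abs_lt_apply_eq_half {x : X} (hx : x ∉ zInter I) (hu : ∀ y, 0 < u y) :
    ∃ g ∈ I, (∀ y, |g y| < u y) ∧ g x = u x / 2 := by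
  obtain ⟨h, hI, hhx⟩ : ∃ h ∈ I, h x ≠ 0 := by simpa [zInter] using hx
  have hden (y : X) : 0 < h y ^ 2 + h x ^ 2 := by positivity
  let k : C(X, ℝ) := ⟨fun y => u y / (h y ^ 2 + h x ^ 2),
    u.continuous.div (by fun_prop) fun y => (hden y).ne'⟩
  have hg (y : X) : (k * h * h) y = u y * (h y ^ 2 / (h y ^ 2 + h x ^ 2)) := by
    simp only [k, ContinuousMap.mul_apply, ContinuousMap.coe_mk]
    ring
  refine ⟨k * h * h, I.mul_mem_left _ hI, fun y => ?_, ?_⟩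
  · have hq : h y ^ 2 / (h y ^ 2 + h x ^ 2) < 1 :=
      (div_lt_one (hden y)).2 (lt_add_of_pos_right _ (by positivity))
    rw [hg, abs_of_nonneg (mul_nonneg (hu y).le (by positivity))]
    exact mul_lt_of_lt_one_right (hu y) hq
  · rw [hg]
    field_simp
    ring

theorem half_lt_of_mBall_subset_mBall {x : X} (hx : x ∉ zInter I) (hu : ∀ y, 0 < u y)
    (huv : mBall I f u ⊆ mBall I f v) : u x / 2 < v x := by
  obtain ⟨g, hgI, hgu, hgx⟩ := exists_mem_abs_lt_apply_eq_half hx hu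
  have hfg : f - g ∈ mBall I f u := ⟨fun y => by simpa using hgu y, by simpa using hgI⟩
  have := (huv hfg).1 x
  simp only [ContinuousMap.sub_apply, sub_sub_cancel] at this
  linarith [le_abs_self (g x)]

end mBall

section IPseudocompact

variable {X : Type*} [TopologicalSpace X] {I : Ideal C(X, ℝ)}

theorem IPseudocompact.exists_inv_le (hp : IPseudocompact I) {u : C(X, ℝ)} (hu : ∀ x, 0 < u x) :
    ∃ n : ℕ, ∀ x ∉ zInter I, ((n : ℝ) + 1)⁻¹ ≤ u x := by
  obtain ⟨M, hM⟩ := hp ⟨fun x => (u x)⁻¹, u.continuous.inv₀ fun x => (hu x).ne'⟩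
  obtain ⟨n, hn⟩ := exists_nat_gt M
  refine ⟨n, fun x hx => (inv_le_comm₀ (by positivity) (hu x)).2 ?_⟩
  have := hM x hx
  rw [ContinuousMap.coe_mk] at this
  linarith [le_abs_self (u x)⁻¹]

theorem IPseudocompact.firstCountableTopology (hp : IPseudocompact I) :
    @FirstCountableTopology C(X, ℝ) (mTopology I) := by
  let := mTopology I
  refine ⟨fun f => HasBasis.isCountablyGenerated (p := fun _ : ℕ => True)
    (s := fun n => mBall I f (ContinuousMap.const X ((n : ℝ) + 1)⁻¹)) ?_⟩
  refine (hasBasis_nhds_mBall f).to_hasBasis (fun u hu => ?_) fun n _ =>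
    ⟨_, fun _ => inv_pos.2 n.cast_add_one_pos, subset_rfl⟩
  obtain ⟨n, hn⟩ := hp.exists_inv_le hu
  exact ⟨n, trivial, mBall_subset_mBall_of_forall_notMem_le hu hn⟩

theorem iPseudocompact_of_firstCountableTopology
    [@FirstCountableTopology C(X, ℝ) (mTopology I)] : IPseudocompact I := by
  let := mTopology I
  by_contra hnp
  obtain ⟨f, hf⟩ : ∃ f : C(X, ℝ), ∀ n : ℕ, ∃ x ∉ zInter I, (n : ℝ) < |f x| := by
    simp only [IPseudocompact, BoundedOn, not_forall, not_exists, not_le] at hnp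
    obtain ⟨f, hf⟩ := hnp
    exact ⟨f, fun n => by simpa using hf n⟩
  choose x hxI hxf using hf
  obtain ⟨U, hU, hUbasis⟩ := (hasBasis_nhds_mBall (I := I) 0).exists_antitone_subbasis
  obtain ⟨G, hGpos, hGle⟩ := Real.exists_continuous_pos_le_of_tendsto_atTop
    (t := fun n => |f (x n)|) (c := fun n => U n (x n) / 2)
    (tendsto_atTop_mono (fun n => (hxf n).le) tendsto_natCast_atTop_atTop)
    fun n => half_pos (hU n (x n))
  have hu (y : X) : 0 < (G.comp |f|) y := hGpos _
  obtain ⟨n, -, hn⟩ := hUbasis.toHasBasis.mem_iff.1 ((hasBasis_nhds_mBall 0).mem_of_mem hu)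
  exact (hGle n).not_gt (half_lt_of_mBall_subset_mBall (hxI n) (hU n) hn)

end IPseudocompact

theorem stmt_2_general {X : Type*} [TopologicalSpace X] (I : Ideal C(X, ℝ)) :
    @FirstCountableTopology C(X, ℝ) (mTopology I) ↔ IPseudocompact I :=
  ⟨fun _ => iPseudocompact_of_firstCountableTopology, IPseudocompact.firstCountableTopology⟩

/-- `C(X)` with the `m^I`-topology is first countable
if and only if `X` is `I`-pseudocompact. -/
theorem stmt_2 {X : Type*} [TopologicalSpace X] [T35Space X] (I : Ideal C(X, ℝ)) :
    @FirstCountableTopology C(X, ℝ) (mTopology I) ↔ IPseudocompact I :=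
  stmt_2_general I
end

section
/- Let I be an ideal of C(X). The ring C(X) equipped with the u^I-topology is a topological ring (i.e., multiplication C(X) × C(X) → C(X) is continuous, in addition to the ring's additive structure being continuous) if and only if X is I-pseudocompact. -/
open Set Topology TopologicalSpace Pointwise

/-!
Where `X ∖ ⋂ Z[I]` is bounded, continuity of multiplication is the usual estimate
`|f g - f' g'| ≤ η (2A + η)`, with `A` a bound of `|f|` and `|g|` there; on `⋂ Z[I]` nothing has to
be estimated, because `f - f' ∈ I` forces `f = f'` on it. Conversely, at a point `x₀ ∉ ⋂ Z[I]` the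
ideal contains `h = 2c g² / (g(x₀)² + g²)` with `g(x₀) ≠ 0`, so `h(x₀) = c` and `|h| ≤ 2|c|`. If
multiplication by `f` is continuous at `0`, then `f h` is uniformly small for all small such `h`,
which bounds `|f(x₀)|` independently of `x₀`.
-/

section UTopology

-- `C(X, ℝ)` already carries the compact-open topology as an instance, so the `u^I`-topology is
-- passed explicitly and made the local instance by `let _ := uTopology I` inside proofs.
variable {X : Type*} [TopologicalSpace X] (I : Ideal C(X, ℝ))

theorem mem_uBall_self (f : C(X, ℝ)) {ε : ℝ} (hε : 0 < ε) : f ∈ uBall I f ε :=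
  ⟨⟨0, hε, fun x => by simp⟩, by simp⟩

theorem uBall_mono (f : C(X, ℝ)) {δ ε : ℝ} (h : δ ≤ ε) : uBall I f δ ⊆ uBall I f ε := by
  rintro g ⟨⟨M, hM, hle⟩, hfg⟩
  exact ⟨⟨M, hM.trans_le h, hle⟩, hfg⟩

variable {I}

theorem exists_uBall_subset_of_mem {f g : C(X, ℝ)} {ε : ℝ} (hg : g ∈ uBall I f ε) :
    ∃ δ > 0, uBall I g δ ⊆ uBall I f ε := by
  obtain ⟨⟨M, hM, hle⟩, hfg⟩ := hg
  refine ⟨ε - M, by linarith, ?_⟩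
  rintro h ⟨⟨M', hM', hle'⟩, hgh⟩
  refine ⟨⟨M + M', by linarith, fun x => ?_⟩, ?_⟩
  · calc |f x - h x| = |(f x - g x) + (g x - h x)| := by ring_nf
      _ ≤ M + M' := (abs_add_le _ _).trans (add_le_add (hle x) (hle' x))
  · simpa using I.add_mem hfg hgh

theorem add_mem_uBall {f g f' g' : C(X, ℝ)} {ε δ : ℝ} (hf : f' ∈ uBall I f ε)
    (hg : g' ∈ uBall I g δ) : f' + g' ∈ uBall I (f + g) (ε + δ) := by
  obtain ⟨⟨M, hM, hle⟩, hff'⟩ := hf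
  obtain ⟨⟨M', hM', hle'⟩, hgg'⟩ := hg
  refine ⟨⟨M + M', by linarith, fun x => ?_⟩, ?_⟩
  · calc |(f + g) x - (f' + g') x| = |(f x - f' x) + (g x - g' x)| := by
          rw [ContinuousMap.add_apply, ContinuousMap.add_apply]; ring_nf
      _ ≤ M + M' := (abs_add_le _ _).trans (add_le_add (hle x) (hle' x))
  · simpa [add_sub_add_comm] using I.add_mem hff' hgg'

theorem neg_mem_uBall_neg {f g : C(X, ℝ)} {ε : ℝ} (hg : g ∈ uBall I f ε) :
    -g ∈ uBall I (-f) ε := by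
  obtain ⟨⟨M, hM, hle⟩, hfg⟩ := hg
  refine ⟨⟨M, hM, fun x => ?_⟩, ?_⟩
  · rw [ContinuousMap.neg_apply, ContinuousMap.neg_apply, neg_sub_neg, abs_sub_comm]
    exact hle x
  · rw [neg_sub_neg, ← neg_sub]
    exact I.neg_mem hfg

theorem abs_mul_sub_mul_le {a b a' b' A η : ℝ} (ha : |a| ≤ A) (hb : |b| ≤ A)
    (ha' : |a - a'| ≤ η) (hb' : |b - b'| ≤ η) : |a * b - a' * b'| ≤ η * (2 * A + η) := by
  have hb'A : |b'| ≤ A + η := by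
    calc |b'| = |b - (b - b')| := by ring_nf
      _ ≤ A + η := (abs_sub _ _).trans (add_le_add hb hb')
  calc |a * b - a' * b'| = |a * (b - b') + (a - a') * b'| := by ring_nf
    _ ≤ |a| * |b - b'| + |a - a'| * |b'| := by rw [← abs_mul, ← abs_mul]; exact abs_add_le _ _
    _ ≤ A * η + η * (A + η) := by
      have hη : 0 ≤ η := (abs_nonneg _).trans ha'
      gcongr
      exact (abs_nonneg _).trans ha
    _ = η * (2 * A + η) := by ring

theorem mul_mem_uBall {f g f' g' : C(X, ℝ)} {A δ : ℝ} (hA : 0 ≤ A) (hδ : 0 < δ)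
    (hfA : ∀ x ∈ (zInter I)ᶜ, |f x| ≤ A) (hgA : ∀ x ∈ (zInter I)ᶜ, |g x| ≤ A)
    (hf : f' ∈ uBall I f δ) (hg : g' ∈ uBall I g δ) :
    f' * g' ∈ uBall I (f * g) (δ * (2 * A + δ)) := by
  obtain ⟨⟨M, hM, hle⟩, hff'⟩ := hf
  obtain ⟨⟨M', hM', hle'⟩, hgg'⟩ := hg
  set η := max (max M M') 0
  have hη : 0 ≤ η := le_max_right _ _
  have hηδ : η < δ := max_lt (max_lt hM hM') hδ
  refine ⟨⟨η * (2 * A + η), by nlinarith, fun x => ?_⟩, ?_⟩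
  · by_cases hx : x ∈ zInter I
    · have hf' : f x = f' x := sub_eq_zero.1 (hx _ hff')
      have hg' : g x = g' x := sub_eq_zero.1 (hx _ hgg')
      simp only [ContinuousMap.mul_apply, hf', hg', sub_self, abs_zero]
      positivity
    · exact abs_mul_sub_mul_le (hfA x hx) (hgA x hx) ((hle x).trans (by simp [η]))
        ((hle' x).trans (by simp [η]))
  · rw [show f * g - f' * g' = f * (g - g') + (f - f') * g' by ring]
    exact I.add_mem (I.mul_mem_left f hgg') (I.mul_mem_right g' hff')

variable (I)

theorem isTopologicalBasis_uBall :
    IsTopologicalBasis (t := uTopology I) {B | ∃ f ε, 0 < ε ∧ B = uBall I f ε} := by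
  let _ := uTopology I
  refine ⟨?_, sUnion_eq_univ_iff.2 fun f => ⟨_, ⟨f, 1, one_pos, rfl⟩, mem_uBall_self I f one_pos⟩, rfl⟩
  · rintro _ ⟨f₁, ε₁, -, rfl⟩ _ ⟨f₂, ε₂, -, rfl⟩ g ⟨hg₁, hg₂⟩
    obtain ⟨δ₁, hδ₁, h₁⟩ := exists_uBall_subset_of_mem hg₁
    obtain ⟨δ₂, hδ₂, h₂⟩ := exists_uBall_subset_of_mem hg₂
    refine ⟨uBall I g (min δ₁ δ₂), ⟨g, _, lt_min hδ₁ hδ₂, rfl⟩,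
      mem_uBall_self I g (lt_min hδ₁ hδ₂), subset_inter ?_ ?_⟩
    · exact (uBall_mono I g (min_le_left _ _)).trans h₁
    · exact (uBall_mono I g (min_le_right _ _)).trans h₂

theorem nhds_basis_uBall (f : C(X, ℝ)) :
    (@nhds C(X, ℝ) (uTopology I) f).HasBasis (fun ε : ℝ => 0 < ε) (uBall I f) := by
  let _ := uTopology I
  refine (isTopologicalBasis_uBall I).nhds_hasBasis.to_hasBasis ?_ ?_
  · rintro _ ⟨⟨g, ε, -, rfl⟩, hf⟩
    exact exists_uBall_subset_of_mem hf
  · exact fun ε hε => ⟨uBall I f ε, ⟨⟨f, ε, hε, rfl⟩, mem_uBall_self I f hε⟩, subset_rfl⟩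

theorem continuousAdd_uTopology : @ContinuousAdd C(X, ℝ) (uTopology I) _ := by
  let _ := uTopology I
  refine ⟨continuous_iff_continuousAt.2 fun p => ?_⟩
  refine ((nhds_basis_uBall I p.1).prod_nhds (nhds_basis_uBall I p.2)).tendsto_iff
    (nhds_basis_uBall I _) |>.2 fun ε hε => ⟨(ε / 2, ε / 2), ⟨half_pos hε, half_pos hε⟩, ?_⟩
  rintro q ⟨hq₁, hq₂⟩
  simpa using add_mem_uBall hq₁ hq₂

theorem continuousNeg_uTopology : @ContinuousNeg C(X, ℝ) (uTopology I) _ := by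
  let _ := uTopology I
  exact ⟨continuous_iff_continuousAt.2 fun f => (nhds_basis_uBall I f).tendsto_iff
    (nhds_basis_uBall I (-f)) |>.2 fun ε hε => ⟨ε, hε, fun g hg => neg_mem_uBall_neg hg⟩⟩

variable {I}

theorem IPseudocompact.continuousMul_uTopology (hI : IPseudocompact I) :
    @ContinuousMul C(X, ℝ) (uTopology I) _ := by
  let _ := uTopology I
  refine ⟨continuous_iff_continuousAt.2 fun p => ?_⟩
  obtain ⟨A₁, hA₁⟩ := hI p.1
  obtain ⟨A₂, hA₂⟩ := hI p.2
  set A := max (max A₁ A₂) 0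
  have hA : 0 ≤ A := le_max_right _ _
  refine ((nhds_basis_uBall I p.1).prod_nhds (nhds_basis_uBall I p.2)).tendsto_iff
    (nhds_basis_uBall I _) |>.2 fun ε hε => ?_
  set δ := min 1 (ε / (2 * A + 1))
  have hδ : 0 < δ := lt_min one_pos (by positivity)
  have hδε : δ * (2 * A + δ) ≤ ε := calc
    δ * (2 * A + δ) ≤ ε / (2 * A + 1) * (2 * A + 1) := by
      gcongr
      exacts [min_le_right _ _, min_le_left _ _]
    _ = ε := div_mul_cancel₀ _ (by positivity)
  refine ⟨(δ, δ), ⟨hδ, hδ⟩, ?_⟩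
  rintro q ⟨hq₁, hq₂⟩
  refine uBall_mono I _ hδε (mul_mem_uBall hA hδ (fun x hx => ?_) (fun x hx => ?_) hq₁ hq₂)
  · exact (hA₁ x hx).trans ((le_max_left _ _).trans (le_max_left _ _))
  · exact (hA₂ x hx).trans ((le_max_right _ _).trans (le_max_left _ _))

theorem IPseudocompact.isTopologicalRing_uTopology (hI : IPseudocompact I) :
    @IsTopologicalRing C(X, ℝ) (uTopology I) _ :=
  let _ := uTopology I
  { toContinuousAdd := continuousAdd_uTopology I
    toContinuousMul := hI.continuousMul_uTopology
    toContinuousNeg := continuousNeg_uTopology I }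

theorem exists_mem_ideal_apply_eq {x₀ : X} (hx₀ : x₀ ∉ zInter I) (c : ℝ) :
    ∃ h ∈ I, (∀ x, |h x| ≤ 2 * |c|) ∧ h x₀ = c := by
  obtain ⟨g, hgI, hg₀⟩ : ∃ g ∈ I, g x₀ ≠ 0 := by simpa [zInter] using hx₀
  have hden : ∀ x, 0 < g x₀ ^ 2 + g x ^ 2 := fun x => by positivity
  let k : C(X, ℝ) := ⟨fun x => 2 * c * g x / (g x₀ ^ 2 + g x ^ 2),
    (by fun_prop : Continuous _).div (by fun_prop) fun x => (hden x).ne'⟩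
  have hk : ∀ x, (k * g) x = 2 * c * (g x ^ 2 / (g x₀ ^ 2 + g x ^ 2)) := fun x => by
    simp only [k, ContinuousMap.mul_apply, ContinuousMap.coe_mk]
    ring
  refine ⟨k * g, I.mul_mem_left k hgI, fun x => ?_, ?_⟩
  · have hq : g x ^ 2 / (g x₀ ^ 2 + g x ^ 2) ≤ 1 :=
      (div_le_one (hden x)).2 (le_add_of_nonneg_left (sq_nonneg _))
    rw [hk, abs_mul, abs_mul, abs_two, abs_of_nonneg (by positivity : (0 : ℝ) ≤ _ / _)]
    exact mul_le_of_le_one_right (by positivity) hq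
  · rw [hk]
    field_simp
    ring

theorem exists_abs_le_of_continuousAt_mul_left {f : C(X, ℝ)}
    (hf : @ContinuousAt _ _ (uTopology I) (uTopology I) (f * ·) 0) :
    ∃ M, ∀ x ∈ (zInter I)ᶜ, |f x| ≤ M := by
  let _ := uTopology I
  obtain ⟨δ, hδ, hball⟩ := (nhds_basis_uBall I 0).tendsto_iff (nhds_basis_uBall I 0) |>.1
    (by simpa using hf.tendsto : Filter.Tendsto (f * ·) (𝓝 0) (𝓝 0)) 1 one_pos
  refine ⟨4 / δ, fun x hx => ?_⟩
  obtain ⟨h, hI, hh, hhx⟩ := exists_mem_ideal_apply_eq hx (δ / 4)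
  have hsmall : h ∈ uBall I 0 δ := by
    refine ⟨⟨δ / 2, by linarith, fun y => ?_⟩, by simpa using I.neg_mem hI⟩
    calc |(0 : C(X, ℝ)) y - h y| = |h y| := by simp
      _ ≤ 2 * |δ / 4| := hh y
      _ = δ / 2 := by rw [abs_of_pos (by positivity)]; ring
  obtain ⟨⟨M, hM, hle⟩, -⟩ := hball h hsmall
  have hfx : |f x| * (δ / 4) < 1 := by
    simpa [hhx, abs_mul, abs_of_pos (by positivity : 0 < δ / 4)] using (hle x).trans_lt hM
  rw [le_div_iff₀ hδ]
  linarith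

theorem IPseudocompact.of_isTopologicalRing
    (hR : @IsTopologicalRing C(X, ℝ) (uTopology I) _) : IPseudocompact I :=
  let _ := uTopology I
  fun f => exists_abs_le_of_continuousAt_mul_left (continuous_const_mul f).continuousAt

end UTopology

theorem stmt_3_general {X : Type*} [TopologicalSpace X] (I : Ideal C(X, ℝ)) :
    @IsTopologicalRing C(X, ℝ) (uTopology I) inferInstance ↔ IPseudocompact I :=
  ⟨IPseudocompact.of_isTopologicalRing, IPseudocompact.isTopologicalRing_uTopology⟩

/-- `C(X)` with the `u^I`-topology is a topological ring
if and only if `X` is `I`-pseudocompact. -/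
theorem stmt_3 {X : Type*} [TopologicalSpace X] [T35Space X] (I : Ideal C(X, ℝ)) :
    @IsTopologicalRing C(X, ℝ) (uTopology I) inferInstance ↔ IPseudocompact I :=
  stmt_3_general I
end

section
/- For a Tychonoff space X, the following are equivalent: (i) there exists a nonzero ideal I of C(X) such that X is I-pseudocompact; (ii) there exists at least one point x ∈ X possessing a pseudocompact neighborhood (i.e., X is locally pseudocompact at some point). -/
/-!
A nonzero `g ∈ I` is nonzero on an open set `O ∋ x` contained in `X ∖ ⋂ Z[I]`, so `O` is bounded,
and the closure of a bounded open set is pseudocompact: were `h ∈ C(cl O)` unbounded, the open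
sets `{|h| > n}` would trace a locally finite sequence of open sets all meeting `O`, and a
locally finite sum of bumps of height `n` on them would be a continuous function unbounded on `O`.
Conversely, if `N` is a pseudocompact neighbourhood of `x`, a bump `f` at `x` supported in `N`
generates a nonzero ideal whose `X ∖ ⋂ Z[·]` is `support f ⊆ N`, a bounded set.
-/

open Set Topology TopologicalSpace Pointwise

section

variable {X : Type*} [TopologicalSpace X]

theorem BoundedOn.mono {Y Z : Set X} (hY : BoundedOn Y) (hZY : Z ⊆ Y) : BoundedOn Z := fun f =>
  let ⟨M, hM⟩ := hY f
  ⟨M, fun x hx => hM x (hZY hx)⟩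

theorem PseudocompactOn.boundedOn {S : Set X} (hS : PseudocompactOn S) : BoundedOn S := fun f =>
  let ⟨M, hM⟩ := hS (f.restrict S)
  ⟨M, fun x hx => hM ⟨x, hx⟩⟩

theorem support_subset_compl_zInter {I : Ideal C(X, ℝ)} {g : C(X, ℝ)} (hg : g ∈ I) :
    Function.support g ⊆ (zInter I)ᶜ := fun _ hx hzero => hx (hzero g hg)

theorem zInter_span_singleton (f : C(X, ℝ)) :
    zInter (Ideal.span {f}) = {x | f x = 0} := by
  ext x
  refine ⟨fun hx => hx f (Ideal.mem_span_singleton_self f), fun hx g hg => ?_⟩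
  obtain ⟨k, rfl⟩ := Ideal.mem_span_singleton.mp hg
  simp [show f x = 0 from hx]

theorem exists_continuousMap_eq_one_support_subset [CompletelyRegularSpace X] {W : Set X}
    (hW : IsOpen W) {p : X} (hp : p ∈ W) :
    ∃ g : C(X, ℝ), g p = 1 ∧ (∀ z, 0 ≤ g z) ∧ Function.support g ⊆ W := by
  obtain ⟨f, hfc, hfp, hfW⟩ := CompletelyRegularSpace.completely_regular_isOpen p W hW hp
  refine ⟨⟨fun z => 1 - f z, by fun_prop⟩, by simp [hfp], fun z => sub_nonneg.mpr (f z).2.2,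
    fun z hz => ?_⟩
  by_contra hzW
  exact hz (by simp [hfW hzW])

theorem locallyFinite_Ioi_natCast : LocallyFinite fun n : ℕ => Ioi (n : ℝ) := by
  intro x
  refine ⟨Iio (x + 1), Iio_mem_nhds (lt_add_one x), (finite_Iic ⌈x + 1⌉₊).subset ?_⟩
  rintro n ⟨y, hny, hyx⟩
  exact Nat.cast_le.mp ((lt_trans hny hyx).le.trans (Nat.le_ceil _))

theorem LocallyFinite.image_of_isClosedEmbedding {ι Y : Type*} [TopologicalSpace Y]
    {e : Y → X} (he : IsClosedEmbedding e) {f : ι → Set Y} (hf : LocallyFinite f) :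
    LocallyFinite fun i => e '' f i := by
  intro x
  by_cases hx : x ∈ range e
  · obtain ⟨y, rfl⟩ := hx
    obtain ⟨t, ht, hfin⟩ := hf y
    obtain ⟨t', ht', hpre⟩ := he.isInducing.nhds_eq_comap y ▸ ht
    refine ⟨t', ht', hfin.subset ?_⟩
    rintro i ⟨_, ⟨z, hz, rfl⟩, hzt'⟩
    exact ⟨z, hz, hpre hzt'⟩
  · refine ⟨(range e)ᶜ, he.isClosed_range.isOpen_compl.mem_nhds hx, ?_⟩
    simp only [disjoint_compl_right_iff_subset.mpr (image_subset_range e _) |>.inter_eq,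
      Set.not_nonempty_empty, ofPred_false, finite_empty]

theorem not_boundedOn_of_locallyFinite [CompletelyRegularSpace X] {Y : Set X} {W : ℕ → Set X}
    (hW : ∀ n, IsOpen (W n)) (hWY : ∀ n, (W n ∩ Y).Nonempty) (hlf : LocallyFinite W) :
    ¬ BoundedOn Y := by
  intro hY
  choose p hpW hpY using hWY
  choose g hgp hg_nonneg hg_supp using
    fun n => exists_continuousMap_eq_one_support_subset (hW n) (hpW n)
  have hlf_supp : LocallyFinite fun n : ℕ => Function.support fun z => (n : ℝ) * g n z :=
    hlf.subset fun n => (Function.support_mul_subset_right _ _).trans (hg_supp n)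
  let F : C(X, ℝ) := ⟨fun z => ∑ᶠ n : ℕ, (n : ℝ) * g n z,
    continuous_finsum (fun n => continuous_const.mul (g n).continuous) hlf_supp⟩
  obtain ⟨M, hM⟩ := hY F
  set n := ⌈M⌉₊ + 1
  have hFn : (n : ℝ) ≤ F (p n) := by
    simpa [F, hgp] using single_le_finsum n (f := fun k => (k : ℝ) * g k (p n))
      ((hlf_supp.point_finite (p n)).subset fun _ hk => hk)
      fun k => mul_nonneg k.cast_nonneg (hg_nonneg k _)
  have hMn : M < n := by
    push_cast [n]
    linarith [Nat.le_ceil M]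
  linarith [hM (p n) (hpY n), le_abs_self (F (p n))]

theorem IsOpen.pseudocompactOn_closure [CompletelyRegularSpace X] {O : Set X} (hO : IsOpen O)
    (hb : BoundedOn O) : PseudocompactOn (closure O) := by
  intro h
  by_contra! hunb
  let V : ℕ → Set (closure O) := fun n => {y | (n : ℝ) < |h y|}
  have hV_open : ∀ n, IsOpen (V n) := fun n => isOpen_lt continuous_const (by fun_prop)
  have hV_lf : LocallyFinite fun n => ((↑) : closure O → X) '' V n :=
    (locallyFinite_Ioi_natCast.preimage_continuous (by fun_prop)).image_of_isClosedEmbedding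
      isClosed_closure.isClosedEmbedding_subtypeVal
  choose U hU_open hUV using fun n => isOpen_induced_iff.mp (hV_open n)
  refine not_boundedOn_of_locallyFinite (W := fun n => U n ∩ O)
    (fun n => (hU_open n).inter hO) (fun n => ?_) (hV_lf.subset fun n x hx => ?_) hb
  · obtain ⟨y, hy⟩ := hunb n
    have hyU : (y : X) ∈ U n := show y ∈ (↑) ⁻¹' U n by rw [hUV n]; exact hy
    obtain ⟨z, hzU, hzO⟩ := mem_closure_iff.mp y.2 (U n) (hU_open n) hyU
    exact ⟨z, ⟨hzU, hzO⟩, hzO⟩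
  · refine ⟨⟨x, subset_closure hx.2⟩, ?_, rfl⟩
    rw [← hUV n]
    exact hx.1

end

/-- there is a nonzero ideal `I` of `C(X)` making `X`
`I`-pseudocompact if and only if some point of `X` has a pseudocompact
neighborhood. -/
theorem stmt_10 {X : Type*} [TopologicalSpace X] [T35Space X] :
    (∃ I : Ideal C(X, ℝ), I ≠ ⊥ ∧ IPseudocompact I) ↔
      ∃ x : X, ∃ N ∈ nhds x, PseudocompactOn N := by
  constructor
  · rintro ⟨I, hI, hIps⟩
    obtain ⟨g, hgI, hg⟩ := (Submodule.ne_bot_iff I).mp hI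
    obtain ⟨x, hgx⟩ : ∃ x, g x ≠ 0 := by
      by_contra! h
      exact hg (ContinuousMap.ext h)
    have hO : IsOpen (Function.support g) := g.continuous.isOpen_support
    exact ⟨x, closure (Function.support g),
      Filter.mem_of_superset (hO.mem_nhds hgx) subset_closure,
      hO.pseudocompactOn_closure (hIps.mono (support_subset_compl_zInter hgI))⟩
  · rintro ⟨x, N, hN, hpcN⟩
    obtain ⟨U, hUN, hU, hxU⟩ := mem_nhds_iff.mp hN
    obtain ⟨f, hfx, -, hfU⟩ := exists_continuousMap_eq_one_support_subset hU hxU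
    refine ⟨Ideal.span {f}, ?_, hpcN.boundedOn.mono ?_⟩
    · rw [Ne, Ideal.span_singleton_eq_bot]
      rintro rfl
      simp at hfx
    · rw [zInter_span_singleton]
      exact hfU.trans hUN
end

section
/- Let I be an ideal of C(X). The following are equivalent: (i) C(X) with the m^I-topology is connected; (ii) C(X) with the m^I-topology is path connected; (iii) C(X) with the u^I-topology is connected; (iv) I = C(X) and X is pseudocompact. -/
open Set Topology TopologicalSpace Pointwise

/-!
Let `B` be the additive subgroup of bounded members of `I`. Every ball `B_u(f, I, 1)` lies in
the coset `f + B`, so `B` is clopen in the `u^I`-topology, and connectedness forces `B = C(X)`: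
then `1 ∈ I` and every function is bounded. The `m^I`-topology is finer than the `u^I`-topology
(a ball `B_m(g, I, δ)` with constant radius sits inside `B_u(f, I, ε)`), so connectedness passes
from the former to the latter. Conversely, if `I = C(X)` and `X` is pseudocompact, every positive
`u ∈ C(X)` is bounded below by a positive constant (as `1/u` is bounded), so the segments
`t ↦ f + t • (g - f)` are continuous into the `m^I`-topology.
-/

section

variable {X : Type*} [TopologicalSpace X]

def boundedPart (I : Ideal C(X, ℝ)) : AddSubgroup C(X, ℝ) where
  carrier := {g | g ∈ I ∧ ∃ M, ∀ x, |g x| ≤ M}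
  zero_mem' := ⟨I.zero_mem, 0, fun x => by simp⟩
  add_mem' := by
    rintro f g ⟨hf, M, hM⟩ ⟨hg, N, hN⟩
    exact ⟨I.add_mem hf hg, M + N, fun x => (abs_add_le _ _).trans (add_le_add (hM x) (hN x))⟩
  neg_mem' := by
    rintro f ⟨hf, M, hM⟩
    exact ⟨I.neg_mem hf, M, fun x => by simpa using hM x⟩

theorem AddSubgroup.isClopen_of_forall_mem_nhds {G : Type*} [AddGroup G] [TopologicalSpace G]
    (H : AddSubgroup G) (h : ∀ f : G, {g | f - g ∈ H} ∈ 𝓝 f) : IsClopen (H : Set G) := by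
  refine ⟨isOpen_compl_iff.mp <| isOpen_iff_mem_nhds.mpr fun f hf => ?_,
    isOpen_iff_mem_nhds.mpr fun f hf => ?_⟩
  · exact Filter.mem_of_superset (h f) fun g hg hgH => hf (by simpa using H.add_mem hg hgH)
  · exact Filter.mem_of_superset (h f) fun g hg => by
      simpa using H.add_mem (H.neg_mem hg) hf

theorem uBall_mem_nhds (I : Ideal C(X, ℝ)) (f : C(X, ℝ)) {ε : ℝ} (hε : 0 < ε) :
    uBall I f ε ∈ @nhds _ (uTopology I) f :=
  @IsOpen.mem_nhds _ (uTopology I) _ _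
    (isOpen_generateFrom_of_mem ⟨f, ε, hε, rfl⟩) ⟨⟨0, hε, fun x => by simp⟩, by simp⟩

theorem isClopen_boundedPart_uTopology (I : Ideal C(X, ℝ)) :
    @IsClopen C(X, ℝ) (uTopology I) (boundedPart I) := by
  let _ := uTopology I
  refine (boundedPart I).isClopen_of_forall_mem_nhds fun f => ?_
  refine Filter.mem_of_superset (uBall_mem_nhds I f one_pos) ?_
  rintro g ⟨⟨M, -, hM⟩, hfg⟩
  exact ⟨hfg, M, hM⟩

theorem eq_top_and_bounded_of_connectedSpace_uTopology {I : Ideal C(X, ℝ)}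
    (h : @ConnectedSpace C(X, ℝ) (uTopology I)) :
    I = ⊤ ∧ ∀ f : C(X, ℝ), ∃ M : ℝ, ∀ x : X, |f x| ≤ M := by
  let _ := uTopology I
  have huniv := (isClopen_boundedPart_uTopology I).eq_univ ⟨0, (boundedPart I).zero_mem⟩
  have hall : ∀ f, f ∈ boundedPart I := eq_univ_iff_forall.mp huniv
  exact ⟨(Ideal.eq_top_iff_one I).2 (hall 1).1, fun f => (hall f).2⟩

theorem mTopology_le_uTopology (I : Ideal C(X, ℝ)) : mTopology I ≤ uTopology I := by
  refine le_generateFrom ?_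
  rintro _ ⟨f, ε, -, rfl⟩
  refine (@isOpen_iff_forall_mem_open _ (mTopology I) _).mpr ?_
  rintro g ⟨⟨M, hMε, hM⟩, hfg⟩
  have hδ : 0 < (ε - M) / 2 := by linarith
  refine ⟨mBall I g (ContinuousMap.const X ((ε - M) / 2)), ?_,
    isOpen_generateFrom_of_mem ⟨g, _, fun _ => hδ, rfl⟩, fun _ => by simpa using hδ, by simp⟩
  rintro k ⟨hgk, hgkI⟩
  refine ⟨⟨M + (ε - M) / 2, by linarith, fun x => ?_⟩, by simpa using I.add_mem hfg hgkI⟩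
  calc |f x - k x| = |(f x - g x) + (g x - k x)| := by ring_nf
    _ ≤ |f x - g x| + |g x - k x| := abs_add_le _ _
    _ ≤ M + (ε - M) / 2 := add_le_add (hM x) (by simpa using (hgk x).le)

theorem exists_pos_le_of_forall_bounded (hX : ∀ f : C(X, ℝ), ∃ M : ℝ, ∀ x : X, |f x| ≤ M)
    (w : C(X, ℝ)) (hw : ∀ x, 0 < w x) : ∃ c > 0, ∀ x, c ≤ w x := by
  obtain ⟨M, hM⟩ := hX ⟨fun x => (w x)⁻¹, w.continuous.inv₀ fun x => (hw x).ne'⟩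
  refine ⟨(max M 1)⁻¹, inv_pos.2 (lt_max_of_lt_right one_pos), fun x => ?_⟩
  exact inv_le_of_inv_le₀ (hw x) ((le_abs_self _).trans ((hM x).trans (le_max_left _ _)))

theorem continuous_add_smul_mTopology (hX : ∀ f : C(X, ℝ), ∃ M : ℝ, ∀ x : X, |f x| ≤ M)
    {I : Ideal C(X, ℝ)} {h : C(X, ℝ)} (hh : h ∈ I) (f : C(X, ℝ)) :
    Continuous[_, mTopology I] fun t : ℝ => f + t • h := by
  rw [mTopology, continuous_generateFrom_iff]
  rintro _ ⟨f', u, -, rfl⟩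
  refine Metric.isOpen_iff.mpr ?_
  rintro t₀ ⟨ht₀, hI⟩
  set d := f' - (f + t₀ • h) with hd
  obtain ⟨c, hc, hcd⟩ := exists_pos_le_of_forall_bounded hX ⟨fun x => u x - |d x|, by fun_prop⟩
    fun x => by simpa [hd] using ht₀ x
  obtain ⟨K, hK⟩ := hX h
  have hK1 : 0 < |K| + 1 := by positivity
  refine ⟨c / (|K| + 1), div_pos hc hK1, fun t ht => ?_⟩
  rw [Metric.mem_ball, Real.dist_eq] at ht
  have hsplit : f' - (f + t • h) = d + (t₀ - t) • h := by rw [hd, sub_smul]; abel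
  refine ⟨fun x => ?_, hsplit ▸ I.add_mem hI (Submodule.smul_of_tower_mem I _ hh)⟩
  have hsmall : |t₀ - t| * |h x| < c := calc
    |t₀ - t| * |h x| ≤ |t - t₀| * (|K| + 1) := by
      rw [abs_sub_comm]
      gcongr
      linarith [hK x, le_abs_self K]
    _ < c / (|K| + 1) * (|K| + 1) := by gcongr
    _ = c := div_mul_cancel₀ c hK1.ne'
  have hslack : c ≤ u x - |d x| := hcd x
  calc |f' x - (f + t • h) x| = |d x + (t₀ - t) * h x| := by
        rw [← ContinuousMap.sub_apply, hsplit]; rfl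
    _ ≤ |d x| + |t₀ - t| * |h x| := (abs_add_le _ _).trans_eq (by rw [abs_mul])
    _ < u x := by linarith

theorem pathConnectedSpace_mTopology_top (hX : ∀ f : C(X, ℝ), ∃ M : ℝ, ∀ x : X, |f x| ≤ M) :
    @PathConnectedSpace C(X, ℝ) (mTopology ⊤) := by
  let _ := mTopology (⊤ : Ideal C(X, ℝ))
  refine ⟨⟨0⟩, fun f g => ⟨⟨⟨fun t => f + (t : ℝ) • (g - f), ?_⟩, by simp, by simp⟩⟩⟩
  exact (continuous_add_smul_mTopology hX Submodule.mem_top f).comp continuous_subtype_val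

end

theorem stmt_18_general {X : Type*} [TopologicalSpace X] (I : Ideal C(X, ℝ)) :
    [@ConnectedSpace C(X, ℝ) (mTopology I),
     @PathConnectedSpace C(X, ℝ) (mTopology I),
     @ConnectedSpace C(X, ℝ) (uTopology I),
     I = ⊤ ∧ ∀ f : C(X, ℝ), ∃ M : ℝ, ∀ x : X, |f x| ≤ M].TFAE := by
  tfae_have 2 → 1 := fun h => @PathConnectedSpace.connectedSpace _ (mTopology I) h
  tfae_have 1 → 3 := fun h =>
    @Function.Surjective.connectedSpace C(X, ℝ) C(X, ℝ) (mTopology I) h (uTopology I) id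
      Function.surjective_id (continuous_id_of_le (mTopology_le_uTopology I))
  tfae_have 3 → 4 := eq_top_and_bounded_of_connectedSpace_uTopology
  tfae_have 4 → 2 := by
    rintro ⟨rfl, hX⟩
    exact pathConnectedSpace_mTopology_top hX
  tfae_finish

/-- the following are equivalent: (i) `C(X)` with the `m^I`-topology
is connected; (ii) `C(X)` with the `m^I`-topology is path connected; (iii) `C(X)`
with the `u^I`-topology is connected; (iv) `I = C(X)` and `X` is pseudocompact. -/
theorem stmt_18 {X : Type*} [TopologicalSpace X] [T35Space X] (I : Ideal C(X, ℝ)) :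
    [@ConnectedSpace C(X, ℝ) (mTopology I),
     @PathConnectedSpace C(X, ℝ) (mTopology I),
     @ConnectedSpace C(X, ℝ) (uTopology I),
     I = ⊤ ∧ ∀ f : C(X, ℝ), ∃ M : ℝ, ∀ x : X, |f x| ≤ M].TFAE :=
  stmt_18_general I
end
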